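/- arXiv:2106.13055 — 3 statements merged into one kernel-verified Lean document; each statement's English description precedes it below -/
import Mathlib

section
/- Let Φ ∈ ℝ^{N×M} with ΦᵀΦ invertible, y ∈ ℝ^N, and α, σ² > 0. Define the scaled-feature posterior mean w_N(c) = ((1/α)·I + (c²/σ²)·ΦᵀΦ)⁻¹ · (c/σ²)·Φᵀy for c > 0. Then c·w_N(c) → (ΦᵀΦ)⁻¹Φᵀy as c → ∞. -/
open Filter Topology

/-- As the feature matrix is scaled by `c → ∞`, the rescaled posterior mean
`c · w_N(c)` converges to the ordinary least-squares solution `(ΦᵀΦ)⁻¹Φᵀy`. -/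
theorem posterior_mean_limit {N M : ℕ}
    (Φ : Matrix (Fin N) (Fin M) ℝ) (hΦ : IsUnit (Φ.transpose * Φ))
    (y : Fin N → ℝ) (α σsq : ℝ) (hα : 0 < α) (hσ : 0 < σsq) :
    Tendsto
      (fun c : ℝ =>
        c •
          (((1 / α) • (1 : Matrix (Fin M) (Fin M) ℝ)
              + (c ^ 2 / σsq) • (Φ.transpose * Φ))⁻¹).mulVec
            ((c / σsq) • Φ.transpose.mulVec y))
      atTop
      (𝓝 ((Φ.transpose * Φ)⁻¹.mulVec (Φ.transpose.mulVec y))) := by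
  set B := Φ.transpose * Φ with hB
  set v := Φ.transpose.mulVec y with hv
  set g : ℝ → Matrix (Fin M) (Fin M) ℝ := fun c => (σsq / (α * c ^ 2)) • 1 + B with hg
  -- g c → B
  have hc2 : Tendsto (fun c : ℝ => α * c ^ 2) atTop atTop :=
    (tendsto_pow_atTop two_ne_zero).const_mul_atTop hα
  have hscal : Tendsto (fun c : ℝ => σsq / (α * c ^ 2)) atTop (𝓝 0) :=
    tendsto_const_nhds.div_atTop hc2
  have hgten : Tendsto g atTop (𝓝 B) := by
    have : Tendsto (fun c : ℝ => (σsq / (α * c ^ 2)) • (1 : Matrix (Fin M) (Fin M) ℝ) + B)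
        atTop (𝓝 ((0 : ℝ) • (1 : Matrix (Fin M) (Fin M) ℝ) + B)) :=
      (hscal.smul_const _).add tendsto_const_nhds
    simpa using this
  -- det B ≠ 0
  have hBdet : IsUnit B.det := (Matrix.isUnit_iff_isUnit_det B).mp hΦ
  have hBdet0 : B.det ≠ 0 := hBdet.ne_zero
  -- inverse continuous at B
  have hinv : Tendsto (fun c => (g c)⁻¹) atTop (𝓝 B⁻¹) := by
    have hcont : ContinuousAt Inv.inv B :=
      continuousAt_matrix_inv B
        (NormedRing.inverse_continuousAt (hBdet.unit))
    exact hcont.tendsto.comp hgten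
  -- limit of the simplified expression
  have hmain : Tendsto (fun c => ((g c)⁻¹).mulVec v) atTop (𝓝 (B⁻¹.mulVec v)) := by
    have hmv : Continuous fun X : Matrix (Fin M) (Fin M) ℝ => X.mulVec v :=
      continuous_id.matrix_mulVec continuous_const
    exact (hmv.tendsto _).comp hinv
  -- show the original function eventually equals the simplified one
  have hdetten : Tendsto (fun c => (g c).det) atTop (𝓝 B.det) :=
    (continuous_id.matrix_det.tendsto _).comp hgten
  have hev : ∀ᶠ c in atTop, (g c).det ≠ 0 :=
    hdetten (isOpen_ne.mem_nhds hBdet0)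
  have hev2 : ∀ᶠ c : ℝ in atTop, (0 : ℝ) < c := eventually_gt_atTop 0
  have heq : ∀ᶠ c in atTop,
      ((g c)⁻¹).mulVec v =
        c • (((1 / α) • (1 : Matrix (Fin M) (Fin M) ℝ) + (c ^ 2 / σsq) • B)⁻¹).mulVec
          ((c / σsq) • v) := by
    filter_upwards [hev, hev2] with c hdc hc0
    have hc2 : (c : ℝ) ^ 2 ≠ 0 := pow_ne_zero _ hc0.ne'
    have hk : c ^ 2 / σsq ≠ 0 := div_ne_zero hc2 hσ.ne'
    have hA : (1 / α) • (1 : Matrix (Fin M) (Fin M) ℝ) + (c ^ 2 / σsq) • B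
        = (c ^ 2 / σsq) • g c := by
      rw [hg]
      simp only [smul_add, smul_smul]
      congr 1
      congr 1
      field_simp
    rw [hA]
    haveI : Invertible (c ^ 2 / σsq) := invertibleOfNonzero hk
    rw [Matrix.inv_smul (A := g c) (c ^ 2 / σsq) (isUnit_iff_ne_zero.mpr hdc)]
    rw [Matrix.smul_mulVec, Matrix.mulVec_smul, smul_smul, smul_smul]
    have h1 : c * ⅟(c ^ 2 / σsq) * (c / σsq) = 1 := by
      rw [invOf_eq_inv]
      field_simp
    rw [h1, one_smul]
  exact (Filter.Tendsto.congr' heq hmain)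
end

section
/- Let Φ ∈ ℝ^{N×M} with ΦᵀΦ invertible, y ∈ ℝ^N, and α, σ² > 0. With w_N(c) = ((1/α)·I + (c²/σ²)·ΦᵀΦ)⁻¹ · (c/σ²)·Φᵀy, one has ‖w_N(c)‖ → 0 as c → ∞, and moreover c·‖w_N(c)‖ → ‖(ΦᵀΦ)⁻¹Φᵀy‖; i.e. the norm of the posterior mean decays like the reciprocal of the scale of the feature matrix. -/
open Filter Topology

private lemma smul_inv_real {n : ℕ} (k : ℝ) (hk : k ≠ 0)
    (A : Matrix (Fin n) (Fin n) ℝ) : (k • A)⁻¹ = k⁻¹ • A⁻¹ := by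
  rcases eq_or_ne A.det 0 with h | h
  · rw [Matrix.nonsing_inv_apply_not_isUnit A (by simp [h]),
      Matrix.nonsing_inv_apply_not_isUnit _ (by simp [Matrix.det_smul, h]), smul_zero]
  · simpa [Units.smul_def] using
      Matrix.inv_smul' (A := A) (Units.mk0 k hk) (isUnit_iff_ne_zero.mpr h)

/-- The Euclidean norm of the posterior mean `w_N(c)` for the feature matrix scaled
by `c` tends to `0` as `c → ∞`, and decays like `1/c`: `c · ‖w_N(c)‖` converges to
the norm of the ordinary least-squares solution `(ΦᵀΦ)⁻¹Φᵀy`. -/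
theorem posterior_mean_norm_decay {N M : ℕ}
    (Φ : Matrix (Fin N) (Fin M) ℝ) (hΦ : IsUnit (Φ.transpose * Φ))
    (y : Fin N → ℝ) (α σsq : ℝ) (hα : 0 < α) (hσ : 0 < σsq) :
    Tendsto
      (fun c : ℝ =>
        ‖(WithLp.equiv 2 (Fin M → ℝ)).symm
          ((((1 / α) • (1 : Matrix (Fin M) (Fin M) ℝ)
              + (c ^ 2 / σsq) • (Φ.transpose * Φ))⁻¹).mulVec
            ((c / σsq) • Φ.transpose.mulVec y))‖)
      atTop (𝓝 0) ∧
    Tendsto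
      (fun c : ℝ =>
        c * ‖(WithLp.equiv 2 (Fin M → ℝ)).symm
          ((((1 / α) • (1 : Matrix (Fin M) (Fin M) ℝ)
              + (c ^ 2 / σsq) • (Φ.transpose * Φ))⁻¹).mulVec
            ((c / σsq) • Φ.transpose.mulVec y))‖)
      atTop
      (𝓝 ‖(WithLp.equiv 2 (Fin M → ℝ)).symm
        ((Φ.transpose * Φ)⁻¹.mulVec (Φ.transpose.mulVec y))‖) := by
  set B := Φ.transpose * Φ with hB
  set v := Φ.transpose.mulVec y with hv
  have hdet : B.det ≠ 0 := by
    intro h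
    exact (by simp [h] : ¬ IsUnit B.det) ((Matrix.isUnit_iff_isUnit_det B).mp hΦ)
  -- the "normalized" matrix
  set Nc : ℝ → Matrix (Fin M) (Fin M) ℝ := fun c => (σsq / (α * c ^ 2)) • 1 + B with hNc
  -- key algebraic identity
  have key : ∀ c : ℝ, c ≠ 0 →
      (((1 / α) • (1 : Matrix (Fin M) (Fin M) ℝ) + (c ^ 2 / σsq) • B)⁻¹).mulVec
        ((c / σsq) • v) = c⁻¹ • ((Nc c)⁻¹.mulVec v) := by
    intro c hc
    have hc2 : c ^ 2 ≠ 0 := pow_ne_zero _ hc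
    have hk : c ^ 2 / σsq ≠ 0 := div_ne_zero hc2 hσ.ne'
    have hmat : (1 / α) • (1 : Matrix (Fin M) (Fin M) ℝ) + (c ^ 2 / σsq) • B
        = (c ^ 2 / σsq) • Nc c := by
      rw [hNc, smul_add, smul_smul]
      congr 2
      field_simp
    rw [hmat, smul_inv_real _ hk, Matrix.mulVec_smul, Matrix.smul_mulVec,
      smul_smul]
    congr 1
    field_simp
  -- continuity: Nc c → B, and the norm expression converges
  have hNtend : Tendsto Nc atTop (𝓝 B) := by
    have h1 : Tendsto (fun c : ℝ => σsq / (α * c ^ 2)) atTop (𝓝 0) := by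
      apply Tendsto.div_atTop tendsto_const_nhds
      exact (tendsto_pow_atTop two_ne_zero).const_mul_atTop hα
    have h2 : Continuous fun t : ℝ => t • (1 : Matrix (Fin M) (Fin M) ℝ) + B :=
      (continuous_id.smul continuous_const).add continuous_const
    have := (h2.continuousAt (x := (0 : ℝ))).tendsto.comp h1
    simpa [hNc, Function.comp_def] using this
  have hinv : Tendsto (fun c => (Nc c)⁻¹) atTop (𝓝 B⁻¹) := by
    refine (continuousAt_matrix_inv B ?_).tendsto.comp hNtend
    rw [(by ext x; simp [Ring.inverse_eq_inv'] : (Ring.inverse : ℝ → ℝ) = Inv.inv)]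
    exact continuousAt_inv₀ hdet
  have hg : Tendsto
      (fun c => ‖(WithLp.equiv 2 (Fin M → ℝ)).symm ((Nc c)⁻¹.mulVec v)‖) atTop
      (𝓝 ‖(WithLp.equiv 2 (Fin M → ℝ)).symm (B⁻¹.mulVec v)‖) := by
    have hcont : Continuous fun A : Matrix (Fin M) (Fin M) ℝ =>
        ‖(WithLp.equiv 2 (Fin M → ℝ)).symm (A.mulVec v)‖ := by
      refine continuous_norm.comp ?_
      exact (PiLp.continuous_toLp 2 (fun _ : Fin M => ℝ)).comp
        (continuous_id.matrix_mulVec continuous_const)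
    exact (hcont.continuousAt.tendsto.comp hinv :)
  -- second part
  have h2 : Tendsto
      (fun c : ℝ =>
        c * ‖(WithLp.equiv 2 (Fin M → ℝ)).symm
          ((((1 / α) • (1 : Matrix (Fin M) (Fin M) ℝ)
              + (c ^ 2 / σsq) • B)⁻¹).mulVec ((c / σsq) • v))‖) atTop
      (𝓝 ‖(WithLp.equiv 2 (Fin M → ℝ)).symm (B⁻¹.mulVec v)‖) := by
    refine hg.congr' ?_
    filter_upwards [eventually_gt_atTop (0 : ℝ)] with c hc
    rw [key c hc.ne', WithLp.equiv_symm_apply, WithLp.toLp_smul, norm_smul, Real.norm_eq_abs,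
      abs_inv, abs_of_pos hc]
    field_simp
  refine ⟨?_, h2⟩
  have := tendsto_inv_atTop_zero.mul h2
  rw [zero_mul] at this
  refine this.congr' ?_
  filter_upwards [eventually_gt_atTop (0 : ℝ)] with c hc
  rw [← mul_assoc, inv_mul_cancel₀ hc.ne', one_mul]
end

section
/- Let Φ ∈ ℝ^{N×M} with ΦᵀΦ invertible, y ∈ ℝ^N with Φᵀy ≠ 0, and α, σ² > 0. Define w_N(c) = ((1/α)·I + (c²/σ²)·ΦᵀΦ)⁻¹ · (c/σ²)·Φᵀy. Then w_N(1) ≠ 0, and there exists C > 0 such that for all c > C, ‖w_N(c)‖ < ‖w_N(1)‖. (Thus scaling the feature matrix strictly decreases the norm of the posterior mean of the last-layer weights while, by homogeneity, leaving the data-fit unchanged.) -/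
open Matrix Filter Topology


section Aux
variable {M : ℕ} (B : Matrix (Fin M) (Fin M) ℝ) (v : Fin M → ℝ)

theorem aux_posdef (hBpsd : B.PosSemidef) {ε : ℝ} (hε : 0 < ε) :
    (B + ε • (1 : Matrix (Fin M) (Fin M) ℝ)).PosDef := by
  refine Matrix.PosDef.posSemidef_add hBpsd ?_
  rw [Matrix.smul_one_eq_diagonal]
  exact Matrix.PosDef.diagonal fun _ => hε

theorem aux_cont (hB : IsUnit B.det) :
    ContinuousAt (fun ε : ℝ =>
      ((B + ε • (1 : Matrix (Fin M) (Fin M) ℝ))⁻¹).mulVec v) 0 := by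
  have hA : Continuous (fun ε : ℝ => B + ε • (1 : Matrix (Fin M) (Fin M) ℝ)) :=
    continuous_const.add (continuous_id.smul continuous_const)
  have heq : (fun ε : ℝ => ((B + ε • (1 : Matrix (Fin M) (Fin M) ℝ))⁻¹).mulVec v)
      = fun ε : ℝ => ((B + ε • (1 : Matrix (Fin M) (Fin M) ℝ)).det)⁻¹ •
          (((B + ε • (1 : Matrix (Fin M) (Fin M) ℝ)).adjugate).mulVec v) := by
    funext ε
    rw [Matrix.inv_def, Ring.inverse_eq_inv', Matrix.smul_mulVec]
  rw [heq]
  have hdet : ContinuousAt (fun ε : ℝ =>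
      ((B + ε • (1 : Matrix (Fin M) (Fin M) ℝ)).det)⁻¹) 0 := by
    refine ContinuousAt.inv₀ (hA.matrix_det.continuousAt) ?_
    simpa using hB.ne_zero
  exact hdet.smul ((hA.matrix_adjugate.matrix_mulVec continuous_const).continuousAt)
end Aux

section Main
variable {M : ℕ} (B : Matrix (Fin M) (Fin M) ℝ) (v : Fin M → ℝ)

theorem aux_scale (hBpsd : B.PosSemidef) {α σsq : ℝ} (hα : 0 < α) (hσ : 0 < σsq)
    {c : ℝ} (hc : c ≠ 0) :
    (((1 / α) • (1 : Matrix (Fin M) (Fin M) ℝ) + (c ^ 2 / σsq) • B)⁻¹).mulVec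
        ((c / σsq) • v)
      = c⁻¹ • (((B + (σsq / (α * c ^ 2)) • (1 : Matrix (Fin M) (Fin M) ℝ))⁻¹).mulVec v) := by
  have hc2 : (0 : ℝ) < c ^ 2 := by positivity
  have hk : (c ^ 2 / σsq) ≠ 0 := (div_pos hc2 hσ).ne'
  have hεpos : (0 : ℝ) < σsq / (α * c ^ 2) := by positivity
  have hdet : IsUnit (B + (σsq / (α * c ^ 2)) • (1 : Matrix (Fin M) (Fin M) ℝ)).det :=
    (aux_posdef B hBpsd hεpos).det_pos.ne'.isUnit
  have hfac : (1 / α) • (1 : Matrix (Fin M) (Fin M) ℝ) + (c ^ 2 / σsq) • B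
      = (c ^ 2 / σsq) • (B + (σsq / (α * c ^ 2)) • (1 : Matrix (Fin M) (Fin M) ℝ)) := by
    rw [smul_add, smul_smul, add_comm]
    congr 2
    field_simp
  haveI : Invertible (c ^ 2 / σsq) := invertibleOfNonzero hk
  rw [hfac, Matrix.inv_smul _ (c ^ 2 / σsq) hdet, Matrix.smul_mulVec, Matrix.mulVec_smul,
    smul_smul, invOf_eq_inv]
  congr 1
  field_simp

theorem aux_w1_ne (hBpsd : B.PosSemidef) (hv : v ≠ 0) {ε : ℝ} (hε : 0 < ε) :
    ((B + ε • (1 : Matrix (Fin M) (Fin M) ℝ))⁻¹).mulVec v ≠ 0 := by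
  intro h
  have hdet : IsUnit (B + ε • (1 : Matrix (Fin M) (Fin M) ℝ)).det :=
    (aux_posdef B hBpsd hε).det_pos.ne'.isUnit
  have h2 := congrArg ((B + ε • (1 : Matrix (Fin M) (Fin M) ℝ)).mulVec) h
  rw [Matrix.mulVec_mulVec, Matrix.mul_nonsing_inv _ hdet, Matrix.one_mulVec,
    Matrix.mulVec_zero] at h2
  exact hv h2
end Main


/-- The norm of the posterior mean of the last-layer weights can be made strictly
smaller than its unscaled value by scaling the feature matrix: `w_N(1) ≠ 0` and
there is `C > 0` such that `‖w_N(c)‖ < ‖w_N(1)‖` for all `c > C`. -/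
theorem posterior_mean_norm_strict_decrease {N M : ℕ}
    (Φ : Matrix (Fin N) (Fin M) ℝ) (hΦ : IsUnit (Φ.transpose * Φ))
    (y : Fin N → ℝ) (hy : Φ.transpose.mulVec y ≠ 0)
    (α σsq : ℝ) (hα : 0 < α) (hσ : 0 < σsq) :
    (fun c : ℝ =>
        (((1 / α) • (1 : Matrix (Fin M) (Fin M) ℝ)
            + (c ^ 2 / σsq) • (Φ.transpose * Φ))⁻¹).mulVec
          ((c / σsq) • Φ.transpose.mulVec y)) 1 ≠ 0 ∧
    ∃ C > (0 : ℝ), ∀ c > C,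
      ‖(WithLp.equiv 2 (Fin M → ℝ)).symm
        ((fun c : ℝ =>
            (((1 / α) • (1 : Matrix (Fin M) (Fin M) ℝ)
                + (c ^ 2 / σsq) • (Φ.transpose * Φ))⁻¹).mulVec
              ((c / σsq) • Φ.transpose.mulVec y)) c)‖ <
      ‖(WithLp.equiv 2 (Fin M → ℝ)).symm
        ((fun c : ℝ =>
            (((1 / α) • (1 : Matrix (Fin M) (Fin M) ℝ)
                + (c ^ 2 / σsq) • (Φ.transpose * Φ))⁻¹).mulVec
              ((c / σsq) • Φ.transpose.mulVec y)) 1)‖ := by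
  set B := Φ.transpose * Φ with hBdef
  set v := Φ.transpose.mulVec y with hvdef
  set w : ℝ → (Fin M → ℝ) := fun c : ℝ =>
      (((1 / α) • (1 : Matrix (Fin M) (Fin M) ℝ) + (c ^ 2 / σsq) • B)⁻¹).mulVec
        ((c / σsq) • v) with hwdef
  have hBpsd : B.PosSemidef := by
    have h := Matrix.posSemidef_conjTranspose_mul_self Φ
    rwa [Matrix.conjTranspose_eq_transpose_of_trivial] at h
  have hBdet : IsUnit B.det := (Matrix.isUnit_iff_isUnit_det B).mp hΦ
  -- w 1 ≠ 0
  have hw1 : w 1 ≠ 0 := by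
    rw [hwdef]
    simp only
    rw [aux_scale B v hBpsd hα hσ one_ne_zero]
    simp only [inv_one, one_smul]
    exact aux_w1_ne B v hBpsd hy (by positivity)
  refine ⟨hw1, ?_⟩
  -- tendsto 0
  have hεt : Tendsto (fun c : ℝ => σsq / (α * c ^ 2)) atTop (nhds 0) := by
    apply Tendsto.div_atTop (tendsto_const_nhds)
    exact (tendsto_pow_atTop two_ne_zero).const_mul_atTop hα
  have hg := (aux_cont B v hBdet).tendsto.comp hεt
  have hinv : Tendsto (fun c : ℝ => c⁻¹) atTop (nhds 0) := tendsto_inv_atTop_zero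
  have hlim0 : Tendsto (fun c : ℝ =>
      c⁻¹ • (((B + (σsq / (α * c ^ 2)) • (1 : Matrix (Fin M) (Fin M) ℝ))⁻¹).mulVec v))
      atTop (nhds ((0 : ℝ) • (((B + (0:ℝ) • (1 : Matrix (Fin M) (Fin M) ℝ))⁻¹).mulVec v))) :=
    hinv.smul hg
  rw [zero_smul] at hlim0
  have hweq : ∀ᶠ c : ℝ in atTop, (fun c : ℝ =>
      c⁻¹ • (((B + (σsq / (α * c ^ 2)) • (1 : Matrix (Fin M) (Fin M) ℝ))⁻¹).mulVec v)) c
      = w c := by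
    filter_upwards [eventually_ge_atTop (1 : ℝ)] with c hc
    rw [hwdef]
    simp only
    rw [aux_scale B v hBpsd hα hσ (by linarith : c ≠ 0)]
  have hlim : Tendsto w atTop (nhds 0) := hlim0.congr' hweq
  have hlimE : Tendsto (fun c => (WithLp.equiv 2 (Fin M → ℝ)).symm (w c)) atTop (nhds 0) := by
    have hcont := (PiLp.continuous_toLp (p := 2) (β := fun _ : Fin M => ℝ))
    have := (hcont.tendsto 0).comp hlim
    exact this
  have hnorm : Tendsto (fun c => ‖(WithLp.equiv 2 (Fin M → ℝ)).symm (w c)‖) atTop (nhds 0) := by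
    simpa using hlimE.norm
  have hpos : 0 < ‖(WithLp.equiv 2 (Fin M → ℝ)).symm (w 1)‖ := by
    rw [norm_pos_iff]
    intro h
    exact hw1 ((WithLp.equiv 2 (Fin M → ℝ)).symm.injective (by simpa using h))
  have hev := hnorm.eventually_lt_const hpos
  obtain ⟨a, ha⟩ := eventually_atTop.mp hev
  refine ⟨max a 1, lt_of_lt_of_le one_pos (le_max_right a 1), ?_⟩
  intro c hc
  exact ha c (le_of_lt (lt_of_le_of_lt (le_max_left a 1) hc))
end
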